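/- Let Γ be a subgroup of F_n and S ⊆ F_n a subset with Γ ⊆ S, γS ⊆ S for all γ ∈ Γ, and S connected in the Cayley graph of F_n. Then ⋃_{w ∈ I(Γ,S)} P(w) = S. Together with the recovery of Γ as {π(w) : w ∈ I(Γ,S)}, this shows the pair (Γ,S) satisfying these conditions is uniquely determined by I(Γ,S). -/
import Mathlib


/-- Evaluation map `π`: a word (list of letters `(j, ε)` with `ε : Bool` meaning `+1`/`-1`)
is sent to `a_{j₁}^{ε₁} ⋯ a_{j_k}^{ε_k}` in the free group `F_n`. -/
def evalWord (n : ℕ) (w : List (Fin n × Bool)) : FreeGroup (Fin n) :=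
  (w.map fun p => if p.2 then FreeGroup.of p.1 else (FreeGroup.of p.1)⁻¹).prod

/-- The reverse-inverse `w̄` of a word `w`. -/
def barWord {n : ℕ} (w : List (Fin n × Bool)) : List (Fin n × Bool) :=
  (w.map fun p => (p.1, !p.2)).reverse

/-- The prefix set `P(w)` of a word `w`: evaluations of all initial segments of `w`. -/
def prefixSet (n : ℕ) (w : List (Fin n × Bool)) : Set (FreeGroup (Fin n)) :=
  {g | ∃ p, p <+: w ∧ evalWord n p = g}

/-- The Cayley graph of `F_n`: `g` and `h` are adjacent iff `g⁻¹ * h ∈ {a_j^{±1}}`. -/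
def cayley (n : ℕ) : SimpleGraph (FreeGroup (Fin n)) :=
  SimpleGraph.fromRel (fun g h => ∃ j : Fin n, g⁻¹ * h = FreeGroup.of j)

/-- A set of words is fusion-closed if it contains the empty word, is closed under
reverse-inverse, and `x·s ∈ I`, `s̄·y ∈ I` imply `x·y ∈ I`. -/
def FusionClosed (n : ℕ) (I : Set (List (Fin n × Bool))) : Prop :=
  ([] ∈ I) ∧ (∀ w ∈ I, barWord w ∈ I) ∧
    ∀ x s y : List (Fin n × Bool), x ++ s ∈ I → barWord s ++ y ∈ I → x ++ y ∈ I

/-- `I(Γ,S)`: the set of words `w` with `π(w) ∈ Γ` and `P(w) ⊆ S`. -/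
def Iset (n : ℕ) (Γ S : Set (FreeGroup (Fin n))) : Set (List (Fin n × Bool)) :=
  {w | evalWord n w ∈ Γ ∧ prefixSet n w ⊆ S}

lemma evalWord_append (n : ℕ) (x y : List (Fin n × Bool)) :
    evalWord n (x ++ y) = evalWord n x * evalWord n y := by
  simp [evalWord]

lemma barWord_append {n : ℕ} (x y : List (Fin n × Bool)) :
    barWord (x ++ y) = barWord y ++ barWord x := by
  simp [barWord]

lemma barWord_barWord {n : ℕ} (w : List (Fin n × Bool)) : barWord (barWord w) = w := by
  simp [barWord, List.map_reverse, List.map_map, Function.comp_def]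

lemma evalWord_barWord {n : ℕ} (w : List (Fin n × Bool)) :
    evalWord n (barWord w) = (evalWord n w)⁻¹ := by
  induction w with
  | nil => simp [evalWord, barWord]
  | cons l t ih =>
    have h1 : barWord (l :: t) = barWord t ++ barWord [l] := by
      rw [show l :: t = [l] ++ t from rfl, barWord_append]
    have h2 : (l :: t) = [l] ++ t := rfl
    rw [h1, h2, evalWord_append, evalWord_append, ih, mul_inv_rev]
    congr 1
    obtain ⟨j, b⟩ := l
    cases b <;> simp [evalWord, barWord]

lemma prefix_barWord {n : ℕ} (w q : List (Fin n × Bool)) (hq : q <+: barWord w) :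
    ∃ t, t <+: w ∧ evalWord n w * evalWord n q = evalWord n t := by
  obtain ⟨r, hr⟩ := hq
  have hw : w = barWord r ++ barWord q := by
    rw [← barWord_append, hr, barWord_barWord]
  refine ⟨barWord r, ⟨barWord q, hw.symm⟩, ?_⟩
  rw [hw, evalWord_append, evalWord_barWord (w := q)]
  group

lemma prefix_append_cases {α : Type*} (a b c : List α) (h : c <+: a ++ b) :
    c <+: a ∨ ∃ q, q <+: b ∧ c = a ++ q := by
  obtain ⟨r, hr⟩ := h
  rcases List.append_eq_append_iff.mp hr with ⟨a', ha, _⟩ | ⟨c', hc, hb⟩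
  · exact Or.inl ⟨a', ha.symm⟩
  · exact Or.inr ⟨c', ⟨r, hb.symm⟩, hc⟩

/-- A walk in the induced graph yields a word with prefixes staying in `S`. -/
lemma walk_word {n : ℕ} (S : Set (FreeGroup (Fin n))) :
    ∀ (u v : S), (SimpleGraph.induce S (cayley n)).Walk u v →
      ∃ w, (u : FreeGroup (Fin n)) * evalWord n w = v ∧
        ∀ g ∈ prefixSet n w, (u : FreeGroup (Fin n)) * g ∈ S := by
  intro u v p
  induction p with
  | nil =>
    refine ⟨[], by simp [evalWord], ?_⟩
    rintro g ⟨q, hq, rfl⟩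
    rw [List.prefix_nil.mp hq]
    simpa [evalWord] using u.2
  | @cons u u' v hadj p ih =>
    obtain ⟨w, hw, hP⟩ := ih
    have hadj' : (cayley n).Adj u.1 u'.1 := hadj
    rw [cayley, SimpleGraph.fromRel_adj] at hadj'
    have : ∃ ℓ : Fin n × Bool, (u : FreeGroup (Fin n)) * evalWord n [ℓ] = u' := by
      rcases hadj'.2 with ⟨j, hj⟩ | ⟨j, hj⟩
      · exact ⟨(j, true), by simp [evalWord]; rw [← hj]; group⟩
      · refine ⟨(j, false), ?_⟩
        have : (u' : FreeGroup (Fin n)) * FreeGroup.of j = u := by rw [← hj]; group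
        simp [evalWord]
        rw [← this]; group
    obtain ⟨ℓ, hℓ⟩ := this
    refine ⟨ℓ :: w, ?_, ?_⟩
    · rw [show ℓ :: w = [ℓ] ++ w from rfl, evalWord_append, ← mul_assoc, hℓ, hw]
    · rintro g ⟨q, hq, rfl⟩
      cases q with
      | nil => simpa [evalWord] using u.2
      | cons a q' =>
        obtain ⟨rfl, hq'⟩ := List.cons_prefix_cons.mp hq
        rw [show a :: q' = [a] ++ q' from rfl, evalWord_append, ← mul_assoc, hℓ]
        exact hP _ ⟨q', hq', rfl⟩

lemma reach {n : ℕ} (S : Set (FreeGroup (Fin n)))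
    (hconn : (SimpleGraph.induce S (cayley n)).Connected)
    (h1 : (1 : FreeGroup (Fin n)) ∈ S) :
    ∀ s ∈ S, ∃ w, evalWord n w = s ∧ prefixSet n w ⊆ S := by
  intro s hs
  obtain ⟨p⟩ := hconn.preconnected ⟨1, h1⟩ ⟨s, hs⟩
  obtain ⟨w, hw, hP⟩ := walk_word S _ _ p
  refine ⟨w, by simpa using hw, ?_⟩
  rintro g hg
  simpa using hP g hg

lemma union_eq {n : ℕ} (Γ : Subgroup (FreeGroup (Fin n))) (S : Set (FreeGroup (Fin n)))
    (hΓS : (Γ : Set (FreeGroup (Fin n))) ⊆ S)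
    (hconn : (SimpleGraph.induce S (cayley n)).Connected) :
    (⋃ w ∈ Iset n (Γ : Set (FreeGroup (Fin n))) S, prefixSet n w) = S := by
  have h1 : (1 : FreeGroup (Fin n)) ∈ S := hΓS (one_mem Γ)
  ext s
  simp only [Set.mem_iUnion, exists_prop]
  constructor
  · rintro ⟨w, ⟨_, hP⟩, hs⟩
    exact hP hs
  · intro hs
    obtain ⟨w, hw, hP⟩ := reach S hconn h1 s hs
    refine ⟨w ++ barWord w, ⟨?_, ?_⟩, ⟨w, ⟨barWord w, rfl⟩, hw⟩⟩
    · rw [evalWord_append, evalWord_barWord, mul_inv_cancel]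
      exact one_mem Γ
    · rintro g ⟨q, hq, rfl⟩
      rcases prefix_append_cases _ _ _ hq with hqw | ⟨q', hq', rfl⟩
      · exact hP ⟨q, hqw, rfl⟩
      · obtain ⟨t, ht, hev⟩ := prefix_barWord w q' hq'
        rw [evalWord_append, hev]
        exact hP ⟨t, ht, rfl⟩

lemma gamma_eq {n : ℕ} (Γ : Subgroup (FreeGroup (Fin n))) (S : Set (FreeGroup (Fin n)))
    (hΓS : (Γ : Set (FreeGroup (Fin n))) ⊆ S)
    (hconn : (SimpleGraph.induce S (cayley n)).Connected) :
    (Γ : Set (FreeGroup (Fin n))) =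
      {g | ∃ w ∈ Iset n (Γ : Set (FreeGroup (Fin n))) S, evalWord n w = g} := by
  have h1 : (1 : FreeGroup (Fin n)) ∈ S := hΓS (one_mem Γ)
  ext g
  constructor
  · intro hg
    obtain ⟨w, hw, hP⟩ := reach S hconn h1 g (hΓS hg)
    exact ⟨w, ⟨hw ▸ hg, hP⟩, hw⟩
  · rintro ⟨w, ⟨hΓ, _⟩, rfl⟩
    exact hΓ

/-- For `Γ ≤ F_n` and `S ⊆ F_n` with `Γ ⊆ S`, `γS ⊆ S` for all `γ ∈ Γ`, and `S`
connected in the Cayley graph: `⋃_{w ∈ I(Γ,S)} P(w) = S`. Together with the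
recovery of `Γ` as `{π(w) : w ∈ I(Γ,S)}`, the pair `(Γ,S)` is uniquely
determined by `I(Γ,S)`. -/
theorem stmt_16 (n : ℕ) (hn : 1 ≤ n) (Γ : Subgroup (FreeGroup (Fin n)))
    (S : Set (FreeGroup (Fin n))) (hΓS : (Γ : Set (FreeGroup (Fin n))) ⊆ S)
    (hinv : ∀ γ ∈ Γ, ∀ s ∈ S, γ * s ∈ S)
    (hconn : (SimpleGraph.induce S (cayley n)).Connected) :
    (⋃ w ∈ Iset n (Γ : Set (FreeGroup (Fin n))) S, prefixSet n w) = S ∧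
      ∀ (Γ' : Subgroup (FreeGroup (Fin n))) (S' : Set (FreeGroup (Fin n))),
        (Γ' : Set (FreeGroup (Fin n))) ⊆ S' →
        (∀ γ ∈ Γ', ∀ s ∈ S', γ * s ∈ S') →
        (SimpleGraph.induce S' (cayley n)).Connected →
        Iset n (Γ' : Set (FreeGroup (Fin n))) S' =
          Iset n (Γ : Set (FreeGroup (Fin n))) S →
        Γ' = Γ ∧ S' = S := by
  refine ⟨union_eq Γ S hΓS hconn, ?_⟩
  intro Γ' S' hΓS' hinv' hconn' hI
  have hS' : S' = S := by
    rw [← union_eq Γ' S' hΓS' hconn', hI, union_eq Γ S hΓS hconn]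
  have hΓ' : Γ' = Γ := by
    apply SetLike.coe_injective
    rw [gamma_eq Γ' S' hΓS' hconn', hI, ← gamma_eq Γ S hΓS hconn]
  exact ⟨hΓ', hS'⟩
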